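/- arXiv:2110.12849 — 3 statements merged into one kernel-verified Lean document; each statement's English description precedes it below -/
import Mathlib

section
/- The algebra 𝔠₇₂ on ℂ⁵ with nonzero basis products e₁e₁ = e₄, e₂e₂ = e₅, e₂e₃ = e₄ + e₅, e₄e₄ = e₅ is a nilpotent commutative algebra (A⁶ = 0) that satisfies the almost-Jordan identity 2·(((y·x)·x)·x) + y·((x·x)·x) = 3·((y·(x·x))·x) for all x, y, but does not satisfy the Jordan identity: there exist x, y with ((x·x)·y)·x ≠ (x·x)·(y·x). -/
/-- `IsProdOf μ n z` says that `z` is a product of `n` elements under the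
multiplication `μ`, with some arrangement of parentheses. -/
inductive IsProdOf {V : Type*} (μ : V → V → V) : ℕ → V → Prop
  | base (x : V) : IsProdOf μ 1 x
  | mul {m n : ℕ} {a b : V} :
      IsProdOf μ m a → IsProdOf μ n b → IsProdOf μ (m + n) (μ a b)

/-- Structure constants of the algebra 𝔠₇₂ (e₁e₁ = e₄, e₂e₂ = e₅, e₂e₃ = e₄ + e₅, e₄e₄ = e₅) on ℂ⁵ (basis `e₁, …, e₅` indexed by `Fin 5`),
extended symmetrically; unlisted products of basis vectors are zero. -/
noncomputable def tbl72 : Fin 5 → Fin 5 → Fin 5 → ℂ :=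
  ![![![0,0,0,1,0], 0, 0, 0, 0],
    ![0, ![0,0,0,0,1], ![0,0,0,1,1], 0, 0],
    ![0, ![0,0,0,1,1], 0, 0, 0],
    ![0, 0, 0, ![0,0,0,0,1], 0],
    0]

/-- The bilinear multiplication of the algebra on ℂ⁵. -/
noncomputable def mul72 (x y : Fin 5 → ℂ) : Fin 5 → ℂ :=
  fun k => ∑ i, ∑ j, x i * y j * tbl72 i j k

theorem IsProdOf.mem_of_mul_mem {V : Type*} {μ : V → V → V} {S : ℕ → Set V}
    (h_one : ∀ x, x ∈ S 1)
    (h_mul : ∀ {m n : ℕ} {a b : V}, a ∈ S m → b ∈ S n → μ a b ∈ S (m + n))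
    {n : ℕ} {z : V} (h : IsProdOf μ n z) : z ∈ S n := by
  induction h with
  | base x => exact h_one x
  | mul _ _ iha ihb => exact h_mul iha ihb

theorem mul72_eq (x y : Fin 5 → ℂ) :
    mul72 x y = ![0, 0, 0, x 0 * y 0 + x 1 * y 2 + x 2 * y 1,
      x 1 * y 1 + x 1 * y 2 + x 2 * y 1 + x 3 * y 3] := by
  funext k
  fin_cases k <;> simp [mul72, tbl72, Fin.sum_univ_five]

theorem mul72_comm (x y : Fin 5 → ℂ) : mul72 x y = mul72 y x := by
  funext k
  fin_cases k <;> simp [mul72_eq] <;> ring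

/-- The powers `Aⁿ` of the algebra: `A² = span(e₄, e₅)`, `A³ = A⁴ = span(e₅)` and `A⁵ = 0`. -/
def pow72 (n : ℕ) : Set (Fin 5 → ℂ) :=
  {z | (2 ≤ n → z 0 = 0 ∧ z 1 = 0 ∧ z 2 = 0) ∧ (3 ≤ n → z 3 = 0) ∧ (5 ≤ n → z 4 = 0)}

theorem mul72_mem_pow72 {m n : ℕ} {a b : Fin 5 → ℂ} (ha : a ∈ pow72 m) (hb : b ∈ pow72 n) :
    mul72 a b ∈ pow72 (m + n) := by
  obtain ⟨ha₂, ha₃, -⟩ := ha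
  obtain ⟨hb₂, hb₃, -⟩ := hb
  simp only [pow72, mul72_eq, Set.mem_ofPred_eq]
  refine ⟨fun _ => by simp, fun h => ?_, fun h => ?_⟩
  · -- the `e₄`-coordinate of `ab` only involves the `e₁, e₂, e₃`-coordinates, which vanish on
    -- the factor lying in `A²`
    rcases (by omega : 2 ≤ m ∨ 2 ≤ n) with hm | hn
    · obtain ⟨h0, h1, h2⟩ := ha₂ hm
      simp [h0, h1, h2]
    · obtain ⟨h0, h1, h2⟩ := hb₂ hn
      simp [h0, h1, h2]
  · -- one factor lies in `A³ = span(e₅)`, which annihilates the algebra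
    rcases (by omega : 3 ≤ m ∨ 3 ≤ n) with hm | hn
    · obtain ⟨h0, h1, h2⟩ := ha₂ (by omega)
      simp [h0, h1, h2, ha₃ hm]
    · obtain ⟨h0, h1, h2⟩ := hb₂ (by omega)
      simp [h0, h1, h2, hb₃ hn]

theorem eq_zero_of_isProdOf_mul72 {n : ℕ} {z : Fin 5 → ℂ} (hn : 5 ≤ n)
    (h : IsProdOf mul72 n z) : z = 0 := by
  obtain ⟨h₂, h₃, h₅⟩ := h.mem_of_mul_mem (S := pow72) (by simp [pow72]) mul72_mem_pow72
  obtain ⟨h0, h1, h2⟩ := h₂ (by omega)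
  funext k
  fin_cases k
  exacts [h0, h1, h2, h₃ (by omega), h₅ hn]

theorem mul72_almostJordan (x y : Fin 5 → ℂ) :
    (2 : ℂ) • mul72 (mul72 (mul72 y x) x) x + mul72 y (mul72 (mul72 x x) x) =
      (3 : ℂ) • mul72 (mul72 y (mul72 x x)) x := by
  simp only [mul72_eq]
  funext k
  fin_cases k <;> simp

/-- With `x = e₁ + e₂` and `y = e₃`: `x² = e₄ + e₅` is killed by `e₃`, while `yx = e₄ + e₅`
and `(e₄ + e₅)² = e₅`. -/
theorem mul72_not_jordan :
    mul72 (mul72 (mul72 ![1, 1, 0, 0, 0] ![1, 1, 0, 0, 0]) ![0, 0, 1, 0, 0]) ![1, 1, 0, 0, 0] ≠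
      mul72 (mul72 ![1, 1, 0, 0, 0] ![1, 1, 0, 0, 0])
        (mul72 ![0, 0, 1, 0, 0] ![1, 1, 0, 0, 0]) := by
  intro h
  simpa [mul72_eq] using congrFun h 4

/-- The algebra is nilpotent (A⁶ = 0), commutative, satisfies the almost-Jordan identity, but does not satisfy the Jordan identity. -/
theorem c72_properties :
    (∀ x y : Fin 5 → ℂ, mul72 x y = mul72 y x) ∧
    (∀ z : Fin 5 → ℂ, IsProdOf (mul72) 6 z → z = 0) ∧
    (∀ x y : Fin 5 → ℂ,
        (2 : ℂ) • mul72 (mul72 (mul72 y x) x) x + mul72 y (mul72 (mul72 x x) x) =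
          (3 : ℂ) • mul72 (mul72 y (mul72 x x)) x) ∧
    (∃ x y : Fin 5 → ℂ,
        mul72 (mul72 (mul72 x x) y) x ≠ mul72 (mul72 x x) (mul72 y x)) :=
  ⟨mul72_comm, fun _ => eq_zero_of_isProdOf_mul72 (by norm_num), mul72_almostJordan,
    _, _, mul72_not_jordan⟩
end

section
/- For every α ∈ ℂ, the algebra 𝔠₆₉(α) on ℂ⁵ with nonzero basis products e₁e₁ = e₄, e₁e₂ = α e₅, e₁e₃ = e₅, e₂e₂ = e₅, e₂e₃ = e₄, e₄e₄ = e₅ is a nilpotent commutative algebra (A⁶ = 0) that satisfies the almost-Jordan identity 2·(((y·x)·x)·x) + y·((x·x)·x) = 3·((y·(x·x))·x) for all x, y, but does not satisfy the Jordan identity: there exist x, y with ((x·x)·y)·x ≠ (x·x)·(y·x). -/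
/-- Structure constants of the algebra 𝔠₆₉(α) (e₁e₁ = e₄, e₁e₂ = α e₅, e₁e₃ = e₅, e₂e₂ = e₅, e₂e₃ = e₄, e₄e₄ = e₅) on ℂ⁵ (basis `e₁, …, e₅` indexed by `Fin 5`),
extended symmetrically; unlisted products of basis vectors are zero. -/
noncomputable def tbl69 (α : ℂ) : Fin 5 → Fin 5 → Fin 5 → ℂ :=
  ![![![0,0,0,1,0], ![0,0,0,0,α], ![0,0,0,0,1], 0, 0],
    ![![0,0,0,0,α], ![0,0,0,0,1], ![0,0,0,1,0], 0, 0],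
    ![![0,0,0,0,1], ![0,0,0,1,0], 0, 0, 0],
    ![0, 0, 0, ![0,0,0,0,1], 0],
    0]

/-- The bilinear multiplication of the algebra on ℂ⁵. -/
noncomputable def mul69 (α : ℂ) (x y : Fin 5 → ℂ) : Fin 5 → ℂ :=
  fun k => ∑ i, ∑ j, x i * y j * tbl69 α i j k

/-! Every product lies in `span {e₄, e₅}`, every product of three elements in `span {e₅}`, and
`e₅` annihilates the algebra. Hence a product of five or more factors, which splits into two
factors one of which is a product of at least three elements, vanishes. The same
annihilation kills each of the three terms of the almost-Jordan identity, whereas for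
`x = y = e₁` the Jordan identity compares `((e₁e₁)e₁)e₁ = 0` with `e₄e₄ = e₅`. -/

lemma IsProdOf.one_le {V : Type*} {μ : V → V → V} {n : ℕ} {z : V} (h : IsProdOf μ n z) :
    1 ≤ n := by
  induction h with
  | base => exact le_rfl
  | mul => omega

lemma IsProdOf.exists_eq_mul {V : Type*} {μ : V → V → V} {n : ℕ} {z : V}
    (h : IsProdOf μ n z) (hn : 2 ≤ n) :
    ∃ m k a b, IsProdOf μ m a ∧ IsProdOf μ k b ∧ m + k = n ∧ z = μ a b := by
  cases h with
  | base => omega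
  | mul ha hb => exact ⟨_, _, _, _, ha, hb, rfl, rfl⟩

section Mul69

variable (α : ℂ)

lemma mul69_eq (x y : Fin 5 → ℂ) :
    mul69 α x y = ![0, 0, 0, x 0 * y 0 + x 1 * y 2 + x 2 * y 1,
      α * (x 0 * y 1 + x 1 * y 0) + x 0 * y 2 + x 2 * y 0 + x 1 * y 1 + x 3 * y 3] := by
  ext k
  fin_cases k <;> simp [mul69, tbl69, Fin.sum_univ_five]
  ring

lemma mul69_comm (x y : Fin 5 → ℂ) : mul69 α x y = mul69 α y x := by
  rw [mul69_eq, mul69_eq]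
  ext k
  fin_cases k <;> simp <;> ring

lemma mul69_eq_zero_of_forall_ne_four {a : Fin 5 → ℂ} (ha : ∀ i ≠ 4, a i = 0)
    (b : Fin 5 → ℂ) : mul69 α a b = 0 := by
  simp [mul69_eq, ha 0, ha 1, ha 2, ha 3]

lemma mul69_mul69_apply_ne_four (a b c : Fin 5 → ℂ) {i : Fin 5} (hi : i ≠ 4) :
    mul69 α (mul69 α a b) c i = 0 := by
  rw [mul69_eq]
  fin_cases i <;> simp_all [mul69_eq]

lemma mul69_mul69_mul69_eq_zero (a b c d : Fin 5 → ℂ) :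
    mul69 α (mul69 α (mul69 α a b) c) d = 0 :=
  mul69_eq_zero_of_forall_ne_four α (fun _ => mul69_mul69_apply_ne_four α a b c) d

variable {α}

lemma IsProdOf.mul69_apply_ne_four {n : ℕ} {z : Fin 5 → ℂ} (h : IsProdOf (mul69 α) n z)
    (hn : 3 ≤ n) {i : Fin 5} (hi : i ≠ 4) : z i = 0 := by
  obtain ⟨m, k, a, b, ha, hb, rfl, rfl⟩ := h.exists_eq_mul (by omega)
  rcases le_or_gt 2 m with hm | hm
  · obtain ⟨-, -, a₁, a₂, -, -, -, rfl⟩ := ha.exists_eq_mul hm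
    exact mul69_mul69_apply_ne_four α a₁ a₂ b hi
  · obtain ⟨-, -, b₁, b₂, -, -, -, rfl⟩ := hb.exists_eq_mul (by have := ha.one_le; omega)
    rw [mul69_comm]
    exact mul69_mul69_apply_ne_four α b₁ b₂ a hi

lemma IsProdOf.mul69_eq_zero {n : ℕ} {z : Fin 5 → ℂ} (h : IsProdOf (mul69 α) n z)
    (hn : 5 ≤ n) : z = 0 := by
  obtain ⟨m, k, a, b, ha, hb, rfl, rfl⟩ := h.exists_eq_mul (by omega)
  rcases le_or_gt 3 m with hm | hm
  · exact mul69_eq_zero_of_forall_ne_four α (fun _ => ha.mul69_apply_ne_four hm) b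
  · rw [mul69_comm]
    exact mul69_eq_zero_of_forall_ne_four α (fun _ => hb.mul69_apply_ne_four (by omega)) a

end Mul69

/-- The algebra is nilpotent (A⁶ = 0), commutative, satisfies the almost-Jordan identity, but does not satisfy the Jordan identity. -/
theorem c69_properties (α : ℂ) :
    (∀ x y : Fin 5 → ℂ, mul69 α x y = mul69 α y x) ∧
    (∀ z : Fin 5 → ℂ, IsProdOf (mul69 α) 6 z → z = 0) ∧
    (∀ x y : Fin 5 → ℂ,
        (2 : ℂ) • mul69 α (mul69 α (mul69 α y x) x) x + mul69 α y (mul69 α (mul69 α x x) x) =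
          (3 : ℂ) • mul69 α (mul69 α y (mul69 α x x)) x) ∧
    (∃ x y : Fin 5 → ℂ,
        mul69 α (mul69 α (mul69 α x x) y) x ≠ mul69 α (mul69 α x x) (mul69 α y x)) := by
  refine ⟨mul69_comm α, fun z hz => hz.mul69_eq_zero (by norm_num), fun x y => ?_, ?_⟩
  · rw [mul69_comm α y (mul69 α (mul69 α x x) x), mul69_comm α y (mul69 α x x)]
    simp only [mul69_mul69_mul69_eq_zero, smul_zero, add_zero]
  · refine ⟨Pi.single 0 1, Pi.single 0 1, fun h => ?_⟩
    simpa [mul69_mul69_mul69_eq_zero, mul69_eq] using congrFun h 4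
end

section
/- For every α ∈ ℂ, the algebra 𝔠₈₀(α) on ℂ⁵ with nonzero basis products e₁e₁ = e₂, e₁e₂ = e₃, e₁e₃ = α e₄, e₁e₄ = e₅, e₂e₂ = (α+1)e₄, e₂e₃ = (α+3)e₅ is a nilpotent commutative algebra (A⁶ = 0) that satisfies the almost-Jordan identity 2·(((y·x)·x)·x) + y·((x·x)·x) = 3·((y·(x·x))·x) for all x, y, but does not satisfy the Jordan identity: there exist x, y with ((x·x)·y)·x ≠ (x·x)·(y·x). -/
/-- Structure constants of the algebra 𝔠₈₀(α) (e₁e₁ = e₂, e₁e₂ = e₃, e₁e₃ = α e₄, e₁e₄ = e₅, e₂e₂ = (α+1)e₄, e₂e₃ = (α+3)e₅) on ℂ⁵ (basis `e₁, …, e₅` indexed by `Fin 5`),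
extended symmetrically; unlisted products of basis vectors are zero. -/
noncomputable def tbl80 (α : ℂ) : Fin 5 → Fin 5 → Fin 5 → ℂ :=
  ![![![0,1,0,0,0], ![0,0,1,0,0], ![0,0,0,α,0], ![0,0,0,0,1], 0],
    ![![0,0,1,0,0], ![0,0,0,α+1,0], ![0,0,0,0,α+3], 0, 0],
    ![![0,0,0,α,0], ![0,0,0,0,α+3], 0, 0, 0],
    ![![0,0,0,0,1], 0, 0, 0, 0],
    0]

/-- The bilinear multiplication of the algebra on ℂ⁵. -/
noncomputable def mul80 (α : ℂ) (x y : Fin 5 → ℂ) : Fin 5 → ℂ :=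
  fun k => ∑ i, ∑ j, x i * y j * tbl80 α i j k

open Finset

section TableMul

variable {R : Type*} [CommSemiring R] {d : ℕ}

def tableMul (t : Fin d → Fin d → Fin d → R) (x y : Fin d → R) : Fin d → R :=
  fun k => ∑ i, ∑ j, x i * y j * t i j k

variable {t : Fin d → Fin d → Fin d → R}

theorem tableMul_comm (ht : ∀ i j, t i j = t j i)
    (x y : Fin d → R) : tableMul t x y = tableMul t y x := by
  funext k
  unfold tableMul
  rw [sum_comm]
  refine sum_congr rfl fun i _ => sum_congr rfl fun j _ => ?_
  rw [ht]
  ring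

-- The coordinate `k : Fin d` is the coefficient of `eₖ₊₁`.
def VanishesBelow (n : ℕ) (x : Fin d → R) : Prop :=
  ∀ k : Fin d, (k : ℕ) + 1 < n → x k = 0

theorem VanishesBelow.tableMul (ht : ∀ i j k, t i j k ≠ 0 → (i : ℕ) + j < k) {m n : ℕ}
    {a b : Fin d → R} (ha : VanishesBelow m a) (hb : VanishesBelow n b) :
    VanishesBelow (m + n) (tableMul t a b) := by
  intro k hk
  refine sum_eq_zero fun i _ => sum_eq_zero fun j _ => ?_
  by_cases hi : (i : ℕ) + 1 < m
  · simp [ha i hi]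
  by_cases hj : (j : ℕ) + 1 < n
  · simp [hb j hj]
  have : t i j k = 0 := by
    by_contra h
    have := ht i j k h
    omega
  simp [this]

theorem IsProdOf.vanishesBelow (ht : ∀ i j k, t i j k ≠ 0 → (i : ℕ) + j < k) {n : ℕ}
    {z : Fin d → R} (hz : IsProdOf (tableMul t) n z) : VanishesBelow n z := by
  induction hz with
  | base _ => intro k hk; omega
  | mul _ _ iha ihb => exact iha.tableMul ht ihb

theorem IsProdOf.eq_zero_of_tableMul (ht : ∀ i j k, t i j k ≠ 0 → (i : ℕ) + j < k)
    {z : Fin d → R} (hz : IsProdOf (tableMul t) (d + 1) z) : z = 0 :=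
  funext fun k => hz.vanishesBelow ht k (by omega)

end TableMul

section C80

variable (α : ℂ)

theorem tbl80_symm (i j : Fin 5) : tbl80 α i j = tbl80 α j i := by
  fin_cases i <;> fin_cases j <;> rfl

theorem lt_of_tbl80_ne_zero (i j k : Fin 5) (h : tbl80 α i j k ≠ 0) : (i : ℕ) + j < k := by
  revert h
  fin_cases i <;> fin_cases j <;> fin_cases k <;> simp [tbl80]

theorem mul80_eq (x y : Fin 5 → ℂ) :
    mul80 α x y =
      ![0, x 0 * y 0,
        x 0 * y 1 + x 1 * y 0,
        α * (x 0 * y 2 + x 2 * y 0) + (α + 1) * (x 1 * y 1),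
        x 0 * y 3 + x 3 * y 0 + (α + 3) * (x 1 * y 2 + x 2 * y 1)] := by
  funext k
  fin_cases k <;> simp [mul80, tbl80, Fin.sum_univ_five] <;> ring

theorem mul80_almostJordan (x y : Fin 5 → ℂ) :
    (2 : ℂ) • mul80 α (mul80 α (mul80 α y x) x) x + mul80 α y (mul80 α (mul80 α x x) x) =
      (3 : ℂ) • mul80 α (mul80 α y (mul80 α x x)) x := by
  funext k
  fin_cases k <;> simp [mul80_eq] <;> ring

theorem mul80_not_jordan :
    mul80 α (mul80 α (mul80 α ![1, 0, 0, 0, 0] ![1, 0, 0, 0, 0]) ![0, 1, 0, 0, 0])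
        ![1, 0, 0, 0, 0] ≠
      mul80 α (mul80 α ![1, 0, 0, 0, 0] ![1, 0, 0, 0, 0])
        (mul80 α ![0, 1, 0, 0, 0] ![1, 0, 0, 0, 0]) := by
  intro h
  have h4 := congrFun h 4
  simp [mul80_eq] at h4

end C80

/-- The algebra is nilpotent (A⁶ = 0), commutative, satisfies the almost-Jordan identity, but does not satisfy the Jordan identity. -/
theorem c80_properties (α : ℂ) :
    (∀ x y : Fin 5 → ℂ, mul80 α x y = mul80 α y x) ∧
    (∀ z : Fin 5 → ℂ, IsProdOf (mul80 α) 6 z → z = 0) ∧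
    (∀ x y : Fin 5 → ℂ,
        (2 : ℂ) • mul80 α (mul80 α (mul80 α y x) x) x + mul80 α y (mul80 α (mul80 α x x) x) =
          (3 : ℂ) • mul80 α (mul80 α y (mul80 α x x)) x) ∧
    (∃ x y : Fin 5 → ℂ,
        mul80 α (mul80 α (mul80 α x x) y) x ≠ mul80 α (mul80 α x x) (mul80 α y x)) := by
  rw [show mul80 α = tableMul (tbl80 α) from rfl]
  exact ⟨tableMul_comm (tbl80_symm α),
    fun _ hz => hz.eq_zero_of_tableMul (lt_of_tbl80_ne_zero α),
    mul80_almostJordan α, _, _, mul80_not_jordan α⟩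
end
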